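/- arXiv:2012.03914 — 8 statements merged into one kernel-verified Lean document; each statement's English description precedes it below -/
import Mathlib

section
/- For every λ ∈ ℝ, every t > 0 and every measurable function h : ℝ → [0, ∞), one has ∫_ℝ e^{−2λx} ( ∫_ℝ h(y) dν_x(y) ) dx = ∫_ℝ h(y) e^{−2λy} dy, where ν_x denotes the Gaussian probability measure on ℝ with mean x − λt and variance t. In other words, the measure e^{−2λx} dx is invariant under convolution with the law of B_t − λt, for B a standard Brownian motion. -/
open MeasureTheory ProbabilityTheory Real ENNReal
open scoped NNReal

/-!
The Gaussian transition density `p x y = φ_t(y - x + λt)` of `B_t - λt` is reversible with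
respect to `w x = e^{-2λx}`: `w x * p x y = w y * p y x`, because the Gaussian exponents differ
by `((x - y + λt)² - (y - x + λt)²) / 2t = 2λ(x - y)`, which cancels `w x / w y`. Swapping the order of integration
(Tonelli) and using that `p y ·` integrates to one then gives the invariance.
-/

section DetailedBalance

variable {α : Type*} [MeasurableSpace α] {μ : Measure α} [SFinite μ]

theorem lintegral_mul_lintegral_eq_of_detailed_balance {w : α → ℝ≥0∞} {p : α → α → ℝ≥0∞}
    (hw : Measurable w) (hp : Measurable (Function.uncurry p))
    (hbal : ∀ x y, w x * p x y = w y * p y x) (hnorm : ∀ y, ∫⁻ x, p y x ∂μ = 1)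
    {h : α → ℝ≥0∞} (hh : Measurable h) :
    ∫⁻ x, w x * ∫⁻ y, p x y * h y ∂μ ∂μ = ∫⁻ y, h y * w y ∂μ := by
  calc ∫⁻ x, w x * ∫⁻ y, p x y * h y ∂μ ∂μ
      = ∫⁻ x, ∫⁻ y, w x * p x y * h y ∂μ ∂μ := by
        refine lintegral_congr fun x => ?_
        simp only [mul_assoc]
        exact (lintegral_const_mul _ (hp.of_uncurry_left.mul hh)).symm
    _ = ∫⁻ y, ∫⁻ x, w x * p x y * h y ∂μ ∂μ :=
        lintegral_lintegral_swap ((hw.comp measurable_fst).mul hp |>.mul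
          (hh.comp measurable_snd)).aemeasurable
    _ = ∫⁻ y, (h y * w y) * ∫⁻ x, p y x ∂μ ∂μ := by
        refine lintegral_congr fun y => ?_
        rw [← lintegral_const_mul _ hp.of_uncurry_left]
        exact lintegral_congr fun x => by rw [hbal]; ring
    _ = ∫⁻ y, h y * w y ∂μ := by simp only [hnorm, mul_one]

end DetailedBalance

theorem exp_mul_gaussianPDFReal_sub_mul_symm (lam : ℝ) {v : ℝ≥0} (hv : v ≠ 0) (x y : ℝ) :
    rexp (-2 * lam * x) * gaussianPDFReal (x - lam * v) v y
      = rexp (-2 * lam * y) * gaussianPDFReal (y - lam * v) v x := by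
  have hv' : (v : ℝ) ≠ 0 := by exact_mod_cast hv
  simp only [gaussianPDFReal, mul_left_comm (rexp _), ← Real.exp_add]
  congr 2
  field_simp
  ring

theorem ofReal_exp_mul_gaussianPDF_sub_mul_symm (lam : ℝ) {v : ℝ≥0} (hv : v ≠ 0) (x y : ℝ) :
    ENNReal.ofReal (rexp (-2 * lam * x)) * gaussianPDF (x - lam * v) v y
      = ENNReal.ofReal (rexp (-2 * lam * y)) * gaussianPDF (y - lam * v) v x := by
  simp only [gaussianPDF, ← ENNReal.ofReal_mul (Real.exp_nonneg _),
    exp_mul_gaussianPDFReal_sub_mul_symm lam hv x y]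

/-- The measure `e^{-2λx} dx` is invariant under convolution with the law of `B_t - λt`:
for every measurable `h : ℝ → [0, ∞]`,
`∫ e^{-2λx} (∫ h dν_x) dx = ∫ h(y) e^{-2λy} dy`, where `ν_x = gaussianReal (x - λt) t`. -/
theorem exp_measure_invariant (lam t : ℝ) (ht : 0 < t) (h : ℝ → ℝ≥0∞) (hh : Measurable h) :
    ∫⁻ x, ENNReal.ofReal (Real.exp (-2 * lam * x))
        * (∫⁻ y, h y ∂(gaussianReal (x - lam * t) t.toNNReal))
      = ∫⁻ y, h y * ENNReal.ofReal (Real.exp (-2 * lam * y)) := by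
  lift t to ℝ≥0 using ht.le
  have hv : t ≠ 0 := by exact_mod_cast ht.ne'
  simp only [Real.toNNReal_coe, gaussianReal_of_var_ne_zero _ hv]
  have hdens : ∀ x, ∫⁻ y, h y ∂volume.withDensity (gaussianPDF (x - lam * t) t)
      = ∫⁻ y, gaussianPDF (x - lam * t) t y * h y := fun x =>
    lintegral_withDensity_eq_lintegral_mul _ (measurable_gaussianPDF _ _) hh
  simp only [hdens]
  exact lintegral_mul_lintegral_eq_of_detailed_balance (by fun_prop) (by fun_prop)
    (ofReal_exp_mul_gaussianPDF_sub_mul_symm lam hv) (fun y => lintegral_gaussianPDF_eq_one _ hv) hh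
end

section
/- Fix λ ∈ ℝ, t > 0, constants Z ≥ 0 and Y ≥ 0, and a measurable function f : ℝ → ℝ with f ≥ 0. Then ∫_ℝ ( ∫_ℝ (1 − e^{−f(y)}) dν_x(y) ) (Z e^{−2λx} + Y) dx = ∫_ℝ (1 − e^{−f(y)}) (Z e^{−2λy} + Y) dy, where ν_x denotes the Gaussian probability measure on ℝ with mean x − λt and variance t. (This identity is the analytic content of the fact that a Poisson point process with intensity (Z e^{−2λx} + Y) dx is invariant under independent Brownian motions with drift −λ.) -/
open MeasureTheory ProbabilityTheory Real ENNReal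

lemma pdf_symm (c t : ℝ) (x y : ℝ) :
    gaussianPDFReal (x - c) t.toNNReal y = gaussianPDFReal (y + c) t.toNNReal x := by
  unfold gaussianPDFReal
  congr 2
  ring

lemma key_exp (lam t : ℝ) (ht : 0 < t) (x y : ℝ) :
    Real.exp (-2 * lam * x) * gaussianPDFReal (y + lam * t) t.toNNReal x
      = Real.exp (-2 * lam * y) * gaussianPDFReal (y - lam * t) t.toNNReal x := by
  unfold gaussianPDFReal
  rw [Real.coe_toNNReal t ht.le]
  have h : -2 * lam * x + (-(x - (y + lam * t)) ^ 2 / (2 * t))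
      = -2 * lam * y + (-(x - (y - lam * t)) ^ 2 / (2 * t)) := by
    field_simp
    ring
  rw [mul_left_comm, ← Real.exp_add, h, Real.exp_add, mul_left_comm]

lemma key_real (lam t Z Y : ℝ) (ht : 0 < t) (x y : ℝ) :
    gaussianPDFReal (y + lam * t) t.toNNReal x * (Z * Real.exp (-2 * lam * x) + Y)
      = Z * Real.exp (-2 * lam * y) * gaussianPDFReal (y - lam * t) t.toNNReal x
        + Y * gaussianPDFReal (y + lam * t) t.toNNReal x := by
  linear_combination Z * key_exp lam t ht x y

lemma key_lintegral (lam t Z Y : ℝ) (ht : 0 < t) (hZ : 0 ≤ Z) (hY : 0 ≤ Y) (y : ℝ) :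
    ∫⁻ x, ENNReal.ofReal (gaussianPDFReal (x - lam * t) t.toNNReal y)
        * ENNReal.ofReal (Z * Real.exp (-2 * lam * x) + Y)
      = ENNReal.ofReal (Z * Real.exp (-2 * lam * y) + Y) := by
  have hv : t.toNNReal ≠ 0 := by simp [Real.toNNReal_eq_zero, not_le, ht]
  have h : ∀ x, ENNReal.ofReal (gaussianPDFReal (x - lam * t) t.toNNReal y)
        * ENNReal.ofReal (Z * Real.exp (-2 * lam * x) + Y)
      = ENNReal.ofReal (Z * Real.exp (-2 * lam * y))
          * ENNReal.ofReal (gaussianPDFReal (y - lam * t) t.toNNReal x)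
        + ENNReal.ofReal Y * ENNReal.ofReal (gaussianPDFReal (y + lam * t) t.toNNReal x) := by
    intro x
    rw [pdf_symm, ← ENNReal.ofReal_mul (gaussianPDFReal_nonneg _ _ _), key_real lam t Z Y ht,
      ENNReal.ofReal_add (mul_nonneg (mul_nonneg hZ (Real.exp_nonneg _)) (gaussianPDFReal_nonneg _ _ _))
        (mul_nonneg hY (gaussianPDFReal_nonneg _ _ _)),
      ENNReal.ofReal_mul (by positivity), ENNReal.ofReal_mul hY]
  simp_rw [h]
  rw [lintegral_add_left (by exact ((measurable_gaussianPDF _ _).const_mul _)),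
    lintegral_const_mul' _ _ ofReal_ne_top, lintegral_const_mul' _ _ ofReal_ne_top,
    lintegral_gaussianPDFReal_eq_one _ hv, lintegral_gaussianPDFReal_eq_one _ hv,
    mul_one, mul_one, ← ENNReal.ofReal_add (mul_nonneg hZ (Real.exp_nonneg _)) hY]

/-- The analytic content of the invariance of `PPP((Z e^{-2λx} + Y) dx)` under independent
drifted Brownian motions: for `Z, Y ≥ 0` and measurable `f ≥ 0`,
`∫ (∫ (1 - e^{-f(y)}) dν_x(y)) (Z e^{-2λx} + Y) dx = ∫ (1 - e^{-f(y)}) (Z e^{-2λy} + Y) dy`,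
where `ν_x = gaussianReal (x - λt) t`. -/
theorem ppp_intensity_invariant (lam t Z Y : ℝ) (ht : 0 < t) (hZ : 0 ≤ Z) (hY : 0 ≤ Y)
    (f : ℝ → ℝ) (hf_meas : Measurable f) (hf_nonneg : ∀ y, 0 ≤ f y) :
    ∫⁻ x, (∫⁻ y, ENNReal.ofReal (1 - Real.exp (-f y))
            ∂(gaussianReal (x - lam * t) t.toNNReal))
          * ENNReal.ofReal (Z * Real.exp (-2 * lam * x) + Y)
      = ∫⁻ y, ENNReal.ofReal (1 - Real.exp (-f y))
          * ENNReal.ofReal (Z * Real.exp (-2 * lam * y) + Y) := by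
  have hv : t.toNNReal ≠ 0 := by simp [Real.toNNReal_eq_zero, not_le, ht]
  set g : ℝ → ℝ≥0∞ := fun y => ENNReal.ofReal (1 - Real.exp (-f y)) with hg_def
  set w : ℝ → ℝ≥0∞ := fun x => ENNReal.ofReal (Z * Real.exp (-2 * lam * x) + Y) with hw_def
  have hg : Measurable g := (measurable_const.sub (Real.measurable_exp.comp hf_meas.neg)).ennreal_ofReal
  have hw : Measurable w := by
    apply Measurable.ennreal_ofReal
    exact (measurable_const.mul (Real.measurable_exp.comp (measurable_id.const_mul _))).add
      measurable_const
  have hF : Measurable (fun p : ℝ × ℝ =>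
      ENNReal.ofReal (gaussianPDFReal (p.1 - lam * t) t.toNNReal p.2)) := by
    apply Measurable.ennreal_ofReal
    unfold gaussianPDFReal
    fun_prop
  have h1 : ∀ x : ℝ, ∫⁻ y, g y ∂(gaussianReal (x - lam * t) t.toNNReal)
      = ∫⁻ y, ENNReal.ofReal (gaussianPDFReal (x - lam * t) t.toNNReal y) * g y := by
    intro x
    rw [gaussianReal_of_var_ne_zero _ hv,
      lintegral_withDensity_eq_lintegral_mul _ (measurable_gaussianPDF _ _) hg]
    rfl
  calc ∫⁻ x, (∫⁻ y, g y ∂(gaussianReal (x - lam * t) t.toNNReal)) * w x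
      = ∫⁻ x, ∫⁻ y, ENNReal.ofReal (gaussianPDFReal (x - lam * t) t.toNNReal y) * g y * w x := by
        congr 1; ext x
        rw [h1, ← lintegral_mul_const' _ _ ofReal_ne_top]
    _ = ∫⁻ y, ∫⁻ x, ENNReal.ofReal (gaussianPDFReal (x - lam * t) t.toNNReal y) * g y * w x := by
        rw [lintegral_lintegral_swap]
        exact ((hF.mul (hg.comp measurable_snd)).mul (hw.comp measurable_fst)).aemeasurable
    _ = ∫⁻ y, g y * ∫⁻ x, ENNReal.ofReal (gaussianPDFReal (x - lam * t) t.toNNReal y) * w x := by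
        congr 1; ext y
        rw [← lintegral_const_mul' _ _ ofReal_ne_top]
        congr 1; ext x; ring
    _ = ∫⁻ y, g y * w y := by
        congr 1; ext y
        rw [key_lintegral lam t Z Y ht hZ hY y]
end

section
/- Fix λ > 0. For every ε > 0 there exists T > 0 such that for all t ≥ T and all x ∈ [−λt − t^{2/3}, −λt + t^{2/3}], the Gaussian probability measure ν_x with mean x − λt and variance t satisfies | (2λ/(e^{2λ} − 1)) · √(2πt) · e^{(λt−x)²/(2t)} · ν_x([−1, 0]) − 1 | ≤ ε. In other words, uniformly over x in this window, P(x + B_t − λt ∈ [−1, 0]) = (1 + o_t(1)) · ((e^{2λ} − 1)/(2λ)) · (1/√(2πt)) · e^{−(λt−x)²/(2t)}. -/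
/-!
Completing the square,
`√(2πt) e^{(λt-x)²/(2t)} ν_x([-1,0]) = ∫_{-1}^0 exp(y(x-λt)/t - y²/(2t)) dy`.
On `[-1,0]` this exponent differs from `-2λy` by at most `δ = |x+λt|/t + 1/(2t)`, so the integral
lies within a factor `e^{±δ}` of `∫_{-1}^0 e^{-2λy} dy = (e^{2λ}-1)/(2λ)`; in the window
`|x+λt| ≤ t^{2/3}` we have `δ ≤ t^{-1/3} + 1/(2t) → 0`.
-/

open MeasureTheory ProbabilityTheory Real Filter Topology

theorem integral_exp_mul_of_ne_zero {c : ℝ} (hc : c ≠ 0) (a b : ℝ) :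
    ∫ x in a..b, exp (c * x) = (exp (c * b) - exp (c * a)) / c := by
  rw [intervalIntegral.integral_comp_mul_left (fun x => exp x) hc, integral_exp, smul_eq_mul,
    inv_mul_eq_div]

lemma setIntegral_exp_le_exp_mul {α : Type*} [MeasurableSpace α] {μ : Measure α} {s : Set α}
    {f g : α → ℝ} {δ : ℝ} (hs : MeasurableSet s) (hf : IntegrableOn (fun y => exp (f y)) s μ)
    (hg : IntegrableOn (fun y => exp (g y)) s μ) (hgf : ∀ y ∈ s, g y ≤ f y + δ) :
    ∫ y in s, exp (g y) ∂μ ≤ exp δ * ∫ y in s, exp (f y) ∂μ := by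
  rw [← integral_const_mul]
  refine setIntegral_mono_on hg (hf.const_mul _) hs fun y hy => ?_
  rw [← exp_add, add_comm]
  exact exp_le_exp.mpr (hgf y hy)

lemma abs_div_sub_one_le_exp_sub_one {I K δ : ℝ} (hK : 0 < K) (hIK : I ≤ exp δ * K)
    (hKI : K ≤ exp δ * I) : |I / K - 1| ≤ exp δ - 1 := by
  have hu := exp_pos δ
  have hr : I / K * exp δ ≥ 1 := by
    rw [div_mul_eq_mul_div, ge_iff_le, le_div_iff₀ hK]; linarith
  rw [abs_le]
  constructor
  · nlinarith [sq_nonneg (exp δ - 1)]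
  · linarith [(div_le_iff₀ hK).mpr hIK]

lemma sqrt_mul_exp_mul_gaussianReal_apply (m : ℝ) {v : ℝ} (hv : 0 < v) (s : Set ℝ) :
    √(2 * π * v) * exp (m ^ 2 / (2 * v)) * (gaussianReal m v.toNNReal s).toReal
      = ∫ y in s, exp (y * m / v - y ^ 2 / (2 * v)) := by
  have hv' : v.toNNReal ≠ 0 := (Real.toNNReal_pos.mpr hv).ne'
  have hsqrt : √(2 * π * v) ≠ 0 := (sqrt_pos.mpr (by positivity)).ne'
  rw [gaussianReal_apply_eq_integral _ hv', ENNReal.toReal_ofReal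
    (integral_nonneg fun _ => gaussianPDFReal_nonneg _ _ _), ← integral_const_mul]
  refine integral_congr_ae (ae_of_all _ fun y => ?_)
  simp only [gaussianPDFReal, Real.coe_toNNReal v hv.le]
  rw [mul_right_comm _ (exp _), mul_inv_cancel_left₀ hsqrt, ← exp_add]
  congr 1
  field_simp
  ring

lemma abs_gaussian_exponent_sub_linear_le (lam x : ℝ) {t y : ℝ} (ht : 0 < t)
    (hy : y ∈ Set.Icc (-1 : ℝ) 0) :
    |y * (x - lam * t) / t - y ^ 2 / (2 * t) - -(2 * lam) * y|
      ≤ |x + lam * t| / t + 1 / (2 * t) := by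
  have hy_abs : |y| ≤ 1 := abs_le.mpr ⟨hy.1, hy.2.trans zero_le_one⟩
  have hy_sq : y ^ 2 ≤ 1 := by nlinarith [hy.1, hy.2]
  have hsplit : y * (x - lam * t) / t - y ^ 2 / (2 * t) - -(2 * lam) * y
      = y * (x + lam * t) / t - y ^ 2 / (2 * t) := by
    field_simp
    ring
  rw [hsplit]
  refine (abs_sub _ _).trans (add_le_add ?_ ?_)
  · rw [abs_div, abs_mul, abs_of_pos ht]
    gcongr
    exact mul_le_of_le_one_left (abs_nonneg _) hy_abs
  · rw [abs_of_nonneg (by positivity)]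
    gcongr

lemma abs_normalized_gaussianReal_Icc_sub_one_le (lam : ℝ) (hlam : 0 < lam) {t : ℝ} (ht : 0 < t)
    (x : ℝ) :
    |(2 * lam / (exp (2 * lam) - 1)) * √(2 * π * t) * exp ((lam * t - x) ^ 2 / (2 * t))
        * (gaussianReal (x - lam * t) t.toNNReal (Set.Icc (-1) 0)).toReal - 1|
      ≤ exp (|x + lam * t| / t + 1 / (2 * t)) - 1 := by
  have hK :
      ∫ y in Set.Icc (-1 : ℝ) 0, exp (-(2 * lam) * y) = (exp (2 * lam) - 1) / (2 * lam) := by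
    rw [integral_Icc_eq_integral_Ioc, ← intervalIntegral.integral_of_le (by norm_num),
      integral_exp_mul_of_ne_zero (by linarith), mul_zero, exp_zero, neg_mul_neg, mul_one,
      div_neg, ← neg_div, neg_sub]
  have hK_pos : 0 < (exp (2 * lam) - 1) / (2 * lam) :=
    div_pos (by linarith [add_one_lt_exp (by positivity : 2 * lam ≠ 0)]) (by positivity)
  have hint : ∀ g : ℝ → ℝ, Continuous g → IntegrableOn (fun y => exp (g y)) (Set.Icc (-1) 0) :=
    fun g hg => (continuous_exp.comp hg).integrableOn_Icc
  rw [mul_assoc, mul_assoc, ← mul_assoc (√_), sub_sq_comm (lam * t),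
    sqrt_mul_exp_mul_gaussianReal_apply _ ht, ← inv_div, inv_mul_eq_div, ← hK]
  have hclose := fun y (hy : y ∈ Set.Icc (-1 : ℝ) 0) =>
    abs_le.mp (abs_gaussian_exponent_sub_linear_le lam x ht hy)
  apply abs_div_sub_one_le_exp_sub_one (hK ▸ hK_pos)
  · exact setIntegral_exp_le_exp_mul measurableSet_Icc (hint _ (by fun_prop))
      (hint _ (by fun_prop)) fun y hy => by linarith [(hclose y hy).2]
  · exact setIntegral_exp_le_exp_mul measurableSet_Icc (hint _ (by fun_prop))
      (hint _ (by fun_prop)) fun y hy => by linarith [(hclose y hy).1]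

/-- Uniformly over `x ∈ [-λt - t^{2/3}, -λt + t^{2/3}]` (with `λ > 0`),
`P(x + B_t - λt ∈ [-1, 0]) = (1 + o_t(1)) ((e^{2λ} - 1)/(2λ)) (1/√(2πt)) e^{-(λt-x)²/(2t)}`. -/
theorem interval_prob_asymptotics_left_window (lam : ℝ) (hlam : 0 < lam) :
    ∀ ε > 0, ∃ T > 0, ∀ t ≥ T,
      ∀ x ∈ Set.Icc (-lam * t - t ^ ((2 : ℝ) / 3)) (-lam * t + t ^ ((2 : ℝ) / 3)),
        |(2 * lam / (Real.exp (2 * lam) - 1)) * Real.sqrt (2 * Real.pi * t)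
            * Real.exp ((lam * t - x) ^ 2 / (2 * t))
            * (gaussianReal (x - lam * t) t.toNNReal (Set.Icc (-1) 0)).toReal - 1| ≤ ε := by
  intro ε hε
  have hδ : Tendsto (fun t : ℝ => t ^ (-(1 / 3) : ℝ) + 1 / (2 * t)) atTop (𝓝 0) := by
    simpa only [add_zero, id] using (tendsto_rpow_neg_atTop (by norm_num : (0 : ℝ) < 1 / 3)).add
      ((tendsto_const_nhds (x := (1 : ℝ))).div_atTop (tendsto_id.const_mul_atTop two_pos))
  have hexp_δ : Tendsto (fun t : ℝ => exp (t ^ (-(1 / 3) : ℝ) + 1 / (2 * t)) - 1) atTop (𝓝 0) := by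
    simpa using ((continuous_exp.tendsto 0).comp hδ).sub_const 1
  obtain ⟨T, hT⟩ := eventually_atTop.mp (hexp_δ.eventually (Iic_mem_nhds hε))
  refine ⟨max T 1, by positivity, fun t ht x hx => ?_⟩
  have ht0 : 0 < t := lt_of_lt_of_le one_pos (le_of_max_le_right ht)
  have hwindow : |x + lam * t| / t ≤ t ^ (-(1 / 3) : ℝ) := by
    rw [div_le_iff₀ ht0, ← rpow_add_one ht0.ne', show -(1 / 3 : ℝ) + 1 = 2 / 3 by norm_num]
    exact abs_le.mpr ⟨by linarith [hx.1], by linarith [hx.2]⟩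
  calc _ ≤ exp (|x + lam * t| / t + 1 / (2 * t)) - 1 :=
        abs_normalized_gaussianReal_Icc_sub_one_le lam hlam ht0 x
    _ ≤ exp (t ^ (-(1 / 3) : ℝ) + 1 / (2 * t)) - 1 := by gcongr
    _ ≤ ε := hT t (le_of_max_le_left ht)
end

section
/- Fix λ ∈ ℝ, K ≥ 0, and a continuous function f : ℝ → ℝ with f ≥ 0 and f(y) = 0 whenever |y| > K. For every ε > 0 there exists T > 0 such that for all t ≥ T and all x ∈ [λt − t^{2/3}, λt + t^{2/3}], one has | √(2πt) · e^{(λt−x)²/(2t)} · ∫_ℝ (1 − e^{−f(y)}) dν_x(y) − ∫_ℝ (1 − e^{−f(y)}) dy | ≤ ε, where ν_x is the Gaussian probability measure on ℝ with mean x − λt and variance t. In other words, uniformly over x in this window, E[1 − e^{−f(x + B_t − λt)}] = (1 + o_t(1)) · (∫ (1 − e^{−f(y)}) dy) · (1/√(2πt)) · e^{−(λt−x)²/(2t)}. -/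
open MeasureTheory ProbabilityTheory Real Filter Set Topology
open scoped NNReal

/-!
Completing the square, `√(2πt) e^{m²/(2t)}` times the `N(m, t)` density at `y` is
`exp ((2my - y²)/(2t))`, so the rescaled Gaussian integral is
`∫ exp ((2my - y²)/(2t)) g(y) dy` with `g = 1 - e^{-f}`. On the support `[-K, K]` of `g` the
exponent is at most `(K|m| + K²/2)/t ≤ K t^{-1/3} + K²/(2t)` in the window `|m| ≤ t^{2/3}`, so the
integrand is uniformly close to `g` and the error is at most
`2K (exp (K t^{-1/3} + K²/(2t)) - 1) → 0`.
-/

lemma sqrt_mul_exp_mul_gaussianPDFReal {v : ℝ≥0} (hv : v ≠ 0) (m y : ℝ) :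
    √(2 * π * v) * exp (m ^ 2 / (2 * v)) * gaussianPDFReal m v y
      = exp ((2 * m * y - y ^ 2) / (2 * v)) := by
  have hsqrt : √(2 * π * v) ≠ 0 := by positivity
  calc _ = (√(2 * π * v) * (√(2 * π * v))⁻¹)
        * (exp (m ^ 2 / (2 * v)) * exp (-(y - m) ^ 2 / (2 * v))) := by
        rw [gaussianPDFReal]; ring
    _ = _ := by
        rw [mul_inv_cancel₀ hsqrt, one_mul, ← exp_add]
        congr 1
        ring

lemma sqrt_mul_exp_mul_integral_gaussianReal {v : ℝ≥0} (hv : v ≠ 0) (m : ℝ) (g : ℝ → ℝ) :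
    √(2 * π * v) * exp (m ^ 2 / (2 * v)) * ∫ y, g y ∂gaussianReal m v
      = ∫ y, exp ((2 * m * y - y ^ 2) / (2 * v)) * g y := by
  simp_rw [integral_gaussianReal_eq_integral_smul hv, smul_eq_mul, ← integral_const_mul,
    ← mul_assoc, sqrt_mul_exp_mul_gaussianPDFReal hv]

lemma abs_exp_sub_one_le_exp_abs_sub_one (u : ℝ) : |exp u - 1| ≤ exp |u| - 1 := by
  rcases le_or_gt 0 u with hu | hu
  · rw [abs_of_nonneg hu, abs_of_nonneg (by linarith [one_le_exp hu])]
  · rw [abs_of_neg hu, abs_of_nonpos (by linarith [exp_le_one_iff.mpr hu.le])]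
    nlinarith [add_one_le_exp u, add_one_le_exp (-u), exp_pos u, exp_neg u,
      mul_inv_cancel₀ (exp_pos u).ne']

lemma abs_one_sub_exp_neg_le_one {a : ℝ} (ha : 0 ≤ a) : |1 - exp (-a)| ≤ 1 := by
  rw [abs_le]
  constructor <;> linarith [exp_pos (-a), exp_le_one_iff.mpr (neg_nonpos.mpr ha)]

lemma abs_integral_exp_mul_sub_integral_le {g u : ℝ → ℝ} {K M δ : ℝ} (hK : 0 ≤ K)
    (hg : Continuous g) (hu : Continuous u) (hg_le : ∀ y, |g y| ≤ M)
    (hg_supp : ∀ y ∉ Icc (-K) K, g y = 0) (hu_le : ∀ y ∈ Icc (-K) K, |u y| ≤ δ) :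
    |(∫ y, exp (u y) * g y) - ∫ y, g y| ≤ 2 * K * M * (exp δ - 1) := by
  have hg_int : Integrable g :=
    hg.integrable_of_hasCompactSupport (.intro isCompact_Icc hg_supp)
  have hug_int : Integrable fun y ↦ exp (u y) * g y :=
    ((continuous_exp.comp hu).mul hg).integrable_of_hasCompactSupport
      (.intro isCompact_Icc fun y (hy : y ∉ Icc (-K) K) ↦ by simp [hg_supp y hy])
  have hpointwise : ∀ y ∈ Icc (-K) K, ‖exp (u y) * g y - g y‖ ≤ M * (exp δ - 1) := by
    intro y hy
    rw [norm_eq_abs, ← sub_one_mul, abs_mul, mul_comm]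
    exact mul_le_mul (hg_le y) ((abs_exp_sub_one_le_exp_abs_sub_one _).trans
      (by gcongr; exact hu_le y hy)) (abs_nonneg _) ((abs_nonneg _).trans (hg_le y))
  rw [← integral_sub hug_int hg_int, ← setIntegral_eq_integral_of_forall_compl_eq_zero
    fun y hy ↦ by rw [hg_supp y hy, mul_zero, sub_zero]]
  calc _ ≤ M * (exp δ - 1) * volume.real (Icc (-K) K) :=
        norm_setIntegral_le_of_norm_le_const measure_Icc_lt_top hpointwise
    _ = 2 * K * M * (exp δ - 1) := by
        rw [Real.volume_real_Icc_of_le (by linarith)]; ring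

lemma abs_two_mul_mul_sub_sq_div_le {m y s t K : ℝ} (ht : 0 < t) (hm : |m| ≤ s)
    (hy : |y| ≤ K) :
    |(2 * m * y - y ^ 2) / (2 * t)| ≤ K * s / t + K ^ 2 / (2 * t) := by
  have hnum : |2 * m * y - y ^ 2| ≤ 2 * (K * s) + K ^ 2 := by
    calc |2 * m * y - y ^ 2| ≤ 2 * (|y| * |m|) + |y| ^ 2 := by
          refine (abs_sub _ _).trans_eq ?_
          rw [abs_mul, abs_mul, abs_two, abs_pow]; ring
      _ ≤ 2 * (K * s) + K ^ 2 := by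
          have := abs_nonneg m; have := (abs_nonneg y).trans hy; gcongr
  rw [abs_div, abs_of_pos (by positivity : 0 < 2 * t)]
  calc _ ≤ (2 * (K * s) + K ^ 2) / (2 * t) := by gcongr
    _ = K * s / t + K ^ 2 / (2 * t) := by field_simp

lemma tendsto_mul_rpow_two_thirds_div_add_div_atTop (K : ℝ) :
    Tendsto (fun t : ℝ ↦ K * t ^ (2 / 3 : ℝ) / t + K ^ 2 / (2 * t)) atTop (𝓝 0) := by
  have hpow : Tendsto (fun t : ℝ ↦ t ^ (2 / 3 : ℝ) / t) atTop (𝓝 0) := by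
    refine (tendsto_rpow_neg_atTop (by norm_num : (0 : ℝ) < 1 / 3)).congr' ?_
    filter_upwards [eventually_gt_atTop 0] with t ht
    rw [← rpow_sub_one ht.ne']; norm_num
  have hinv : Tendsto (fun t : ℝ ↦ K ^ 2 / (2 * t)) atTop (𝓝 0) :=
    tendsto_const_nhds.div_atTop (tendsto_id.const_mul_atTop two_pos)
  simpa [mul_div_assoc] using (hpow.const_mul K).add hinv

/-- Uniformly over `x ∈ [λt - t^{2/3}, λt + t^{2/3}]`,
`E[1 - e^{-f(x + B_t - λt)}] = (1 + o_t(1)) (∫ (1 - e^{-f(y)}) dy) (1/√(2πt)) e^{-(λt-x)²/(2t)}`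
for a nonnegative continuous `f` supported in `[-K, K]`. -/
theorem laplace_functional_asymptotics_right_window (lam K : ℝ) (hK : 0 ≤ K)
    (f : ℝ → ℝ) (hf : Continuous f) (hf_nonneg : ∀ y, 0 ≤ f y)
    (hf_supp : ∀ y, K < |y| → f y = 0) :
    ∀ ε > 0, ∃ T > 0, ∀ t ≥ T,
      ∀ x ∈ Set.Icc (lam * t - t ^ ((2 : ℝ) / 3)) (lam * t + t ^ ((2 : ℝ) / 3)),
        |Real.sqrt (2 * Real.pi * t) * Real.exp ((lam * t - x) ^ 2 / (2 * t))
            * (∫ y, (1 - Real.exp (-f y)) ∂(gaussianReal (x - lam * t) t.toNNReal))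
          - ∫ y, (1 - Real.exp (-f y))| ≤ ε := by
  intro ε hε
  set δ : ℝ → ℝ := fun t ↦ K * t ^ (2 / 3 : ℝ) / t + K ^ 2 / (2 * t)
  have herror : Tendsto (fun t ↦ 2 * K * 1 * (exp (δ t) - 1)) atTop (𝓝 0) := by
    simpa using ((continuous_exp.tendsto 0).comp
      (tendsto_mul_rpow_two_thirds_div_add_div_atTop K)).sub_const 1 |>.const_mul (2 * K * 1)
  obtain ⟨T, hT⟩ := eventually_atTop.mp
    ((herror.eventually (ge_mem_nhds hε)).and (eventually_gt_atTop 0))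
  refine ⟨T, (hT T le_rfl).2, fun t ht x hx ↦ ?_⟩
  obtain ⟨hεt, ht0⟩ := hT t ht
  have hm : |x - lam * t| ≤ t ^ (2 / 3 : ℝ) :=
    abs_sub_le_iff.mpr ⟨by linarith [hx.2], by linarith [hx.1]⟩
  have hv : t.toNNReal ≠ 0 := by simpa using ht0
  have hrescale :=
    sqrt_mul_exp_mul_integral_gaussianReal hv (x - lam * t) (fun y ↦ 1 - exp (-f y))
  rw [Real.coe_toNNReal _ ht0.le] at hrescale
  rw [← neg_sub x (lam * t), neg_sq, hrescale]
  refine (abs_integral_exp_mul_sub_integral_le hK (by fun_prop) (by fun_prop)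
    (fun y ↦ abs_one_sub_exp_neg_le_one (hf_nonneg y)) (fun y hy ↦ ?_)
    fun y hy ↦ abs_two_mul_mul_sub_sq_div_le ht0 hm (abs_le.mpr hy)).trans hεt
  rw [hf_supp y (not_le.mp fun hyK ↦ hy (abs_le.mp hyK)), neg_zero, exp_zero, sub_self]
end

section
/- Fix λ > 0 and K ≥ 0. There exists T > 0 such that for all t ≥ T, setting s = t + √t, for every x with |x| ≥ λt + t^{2/3} and every y with |y| ≤ K, one has (y + λt − x)²/(2t) − (y + λs − x)²/(2s) ≥ (λ/4) · t^{1/6}. Moreover the left-hand side equals (y − x)² √t/(2st) − λ² √t/2. -/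
open Real

set_option maxHeartbeats 1000000 in
/-- Exponent comparison for `s = t + √t`: for `t` large, uniformly over `|x| ≥ λt + t^{2/3}`
and `|y| ≤ K`, `(y + λt - x)²/(2t) - (y + λs - x)²/(2s) ≥ (λ/4) t^{1/6}`; moreover the
left-hand side equals `(y - x)² √t/(2st) - λ² √t/2`. -/
theorem exponent_comparison_outer (lam K : ℝ) (hlam : 0 < lam) (hK : 0 ≤ K) :
    ∃ T > 0, ∀ t ≥ T, ∀ x : ℝ, lam * t + t ^ ((2 : ℝ) / 3) ≤ |x| → ∀ y : ℝ, |y| ≤ K →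
      (y + lam * t - x) ^ 2 / (2 * t)
          - (y + lam * (t + Real.sqrt t) - x) ^ 2 / (2 * (t + Real.sqrt t))
        ≥ lam / 4 * t ^ ((1 : ℝ) / 6)
      ∧ (y + lam * t - x) ^ 2 / (2 * t)
          - (y + lam * (t + Real.sqrt t) - x) ^ 2 / (2 * (t + Real.sqrt t))
        = (y - x) ^ 2 * Real.sqrt t / (2 * (t + Real.sqrt t) * t)
          - lam ^ 2 * Real.sqrt t / 2 := by
  refine ⟨(3 + 3*lam + 2*K + 6*K/lam)^6, by positivity, ?_⟩
  intro t ht x hx y hy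
  set R : ℝ := 3 + 3*lam + 2*K + 6*K/lam with hRdef
  have hRpos : 0 < R := by positivity
  have htpos : 0 < t := lt_of_lt_of_le (by positivity) ht
  set r : ℝ := t ^ ((1:ℝ)/6) with hrdef
  have hrpos : 0 < r := Real.rpow_pos_of_pos htpos _
  have hrR : R ≤ r := by
    have h1 : (R^6 : ℝ) ^ ((1:ℝ)/6) ≤ t ^ ((1:ℝ)/6) :=
      Real.rpow_le_rpow (by positivity) ht (by norm_num)
    have h2 : (R^6 : ℝ) ^ ((1:ℝ)/6) = R := by
      rw [← Real.rpow_natCast R 6, ← Real.rpow_mul hRpos.le]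
      norm_num
    rw [h2] at h1; exact h1
  have ht6 : t = r^6 := by
    rw [hrdef, ← Real.rpow_natCast (t ^ ((1:ℝ)/6)) 6, ← Real.rpow_mul htpos.le]
    norm_num
  have hsq : Real.sqrt t = r^3 := by
    rw [Real.sqrt_eq_rpow, hrdef, ← Real.rpow_natCast (t ^ ((1:ℝ)/6)) 3,
      ← Real.rpow_mul htpos.le]
    norm_num
  have h23 : t ^ ((2:ℝ)/3) = r^4 := by
    rw [hrdef, ← Real.rpow_natCast (t ^ ((1:ℝ)/6)) 4, ← Real.rpow_mul htpos.le]
    norm_num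
  -- basic bounds on r
  have h6Kl : 0 ≤ 6*K/lam := by positivity
  have hr3 : (3:ℝ) ≤ r := by
    have : 3 ≤ R := by rw [hRdef]; nlinarith
    linarith
  have hrlam : 3*lam ≤ r := by
    have : 3*lam ≤ R := by rw [hRdef]; nlinarith
    linarith
  have hr2K : 2*K ≤ r := by
    have : 2*K ≤ R := by rw [hRdef]; nlinarith
    linarith
  have hr6K : 6*K ≤ lam*r := by
    have h : 6*K/lam ≤ R := by rw [hRdef]; nlinarith
    have := (div_le_iff₀ hlam).mp (le_trans h hrR)
    linarith
  have h1r : (1:ℝ) ≤ r := by linarith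
  have hr4 : r ≤ r^4 := by
    calc r = r^1 := (pow_one r).symm
      _ ≤ r^4 := pow_le_pow_right₀ h1r (by norm_num)
  have hcube : (27:ℝ) ≤ r^3 := by
    calc (27:ℝ) = 3^3 := by norm_num
      _ ≤ r^3 := pow_le_pow_left₀ (by norm_num) hr3 3
  have hfive : (243:ℝ) ≤ r^5 := by
    calc (243:ℝ) = 3^5 := by norm_num
      _ ≤ r^5 := pow_le_pow_left₀ (by norm_num) hr3 5
  have h27 : 27*r^7 ≤ r^10 := by
    have := mul_le_mul_of_nonneg_right hcube (pow_pos hrpos 7).le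
    nlinarith [this]
  have h243 : 243*r^5 ≤ r^10 := by
    have := mul_le_mul_of_nonneg_right hfive (pow_pos hrpos 5).le
    nlinarith [this]
  -- bound on (y - x)^2
  have hb : 0 ≤ lam*r^6 + r^4 - K := by
    have h1 : 0 < lam*r^6 := mul_pos hlam (pow_pos hrpos 6)
    linarith
  have hxy : lam*r^6 + r^4 - K ≤ |y - x| := by
    have h1 := abs_sub_abs_le_abs_sub x y
    rw [abs_sub_comm] at h1
    rw [h23, ht6] at hx
    linarith
  have ha : (lam*r^6 + r^4 - K)^2 ≤ (y - x)^2 := by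
    calc (lam*r^6 + r^4 - K)^2 ≤ |y - x|^2 := by
          apply pow_le_pow_left₀ hb hxy
      _ = (y - x)^2 := sq_abs _
  -- key polynomial inequality
  have hA : lam^2*r^9 ≤ lam/3 * r^10 := by
    nlinarith [mul_le_mul_of_nonneg_right hrlam (show (0:ℝ) ≤ lam*r^9 by positivity)]
  have hB : lam/2*r^7 ≤ lam/54 * r^10 := by
    nlinarith [mul_le_mul_of_nonneg_left h27 (show (0:ℝ) ≤ lam/54 by positivity)]
  have hC : 2*lam*K*r^6 ≤ lam/27 * r^10 := by
    have hC1 := mul_le_mul_of_nonneg_right hr2K (show (0:ℝ) ≤ lam*r^6 by positivity)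
    have hC2 := mul_le_mul_of_nonneg_left h27 (show (0:ℝ) ≤ lam/27 by positivity)
    nlinarith [hC1, hC2]
  have hD : 2*K*r^4 ≤ lam/729 * r^10 := by
    have hD1 := mul_le_mul_of_nonneg_right hr6K (show (0:ℝ) ≤ r^4 by positivity)
    have hD2 := mul_le_mul_of_nonneg_left h243 (show (0:ℝ) ≤ lam/729 by positivity)
    nlinarith [hD1, hD2]
  have hexp : (lam*r^6 + r^4 - K)^2
      = lam^2*r^12 + r^8 + K^2 + 2*lam*r^10 - 2*lam*K*r^6 - 2*K*r^4 := by ring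
  have key : lam^2*(r^12 + r^9) + lam/2*(r^10 + r^7) ≤ (y - x)^2 := by
    have hpos10 : 0 ≤ lam*r^10 := by positivity
    have hpos8 : 0 ≤ r^8 := by positivity
    have hposK : 0 ≤ K^2 := sq_nonneg K
    linarith [ha, hexp, hA, hB, hC, hD, hpos10, hpos8, hposK]
  -- rewrite the goal in terms of r
  rw [hsq, ht6]
  have hs : (0:ℝ) < r^6 + r^3 := by positivity
  have heq : (y + lam * r^6 - x) ^ 2 / (2 * r^6)
      - (y + lam * (r^6 + r^3) - x) ^ 2 / (2 * (r^6 + r^3))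
      = (y - x) ^ 2 * r^3 / (2 * (r^6 + r^3) * r^6) - lam ^ 2 * r^3 / 2 := by
    field_simp
    ring
  refine ⟨?_, heq⟩
  rw [heq, ge_iff_le, ← sub_nonneg]
  have hrepr : (y - x) ^ 2 * r^3 / (2 * (r^6 + r^3) * r^6) - lam ^ 2 * r^3 / 2
      - lam / 4 * r
      = ((y - x)^2 - (lam^2*(r^12 + r^9) + lam/2*(r^10 + r^7))) / (2 * (r^6 + r^3) * r^3) := by
    field_simp
    ring
  rw [hrepr]
  apply div_nonneg
  · linarith
  · positivity
end

section
/- Fix λ > 0 and K ≥ 0. There exists T > 0 such that for all t ≥ T, setting s = t − √t, for every x with |x| ≤ λt − t^{2/3} and every y with |y| ≤ K, one has (y + λt − x)²/(2t) − (y + λs − x)²/(2s) ≥ (λ/4) · t^{1/6}. -/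
open Real Filter

/-
Write `d = y - x` and `r = √t`. Expanding the squares, the difference of the two exponents is
`(t - s)/2 · (λ² - d²/(ts))`, and `|d| ≤ λt - c` with `c = t^{2/3} - K` gives
`λ² - d²/(ts) ≥ λ (c - λ (t - s)) / t`. With `t - s = r` and `t^{2/3} = t^{1/6} r` the gap is
at least `(λ/2) (t^{1/6} - K/r - λ)`, which exceeds `(λ/4) t^{1/6}` once `t^{1/6} ≥ 2 (K + λ)`.
-/

theorem add_mul_sq_div_sub_add_mul_sq_div (d lam t s : ℝ) (ht : t ≠ 0) (hs : s ≠ 0) :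
    (d + lam * t) ^ 2 / (2 * t) - (d + lam * s) ^ 2 / (2 * s)
      = (t - s) / 2 * (lam ^ 2 - d ^ 2 / (t * s)) := by
  field_simp
  ring

theorem le_add_mul_sq_div_sub_add_mul_sq_div {d lam t s c : ℝ} (hs : 0 < s) (hst : s ≤ t)
    (hlam : 0 ≤ lam) (hc : lam * (t - s) ≤ c) (hct : c ≤ lam * t) (hd : |d| ≤ lam * t - c) :
    lam * (t - s) * (c - lam * (t - s)) / (2 * t)
      ≤ (d + lam * t) ^ 2 / (2 * t) - (d + lam * s) ^ 2 / (2 * s) := by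
  have ht : 0 < t := hs.trans_le hst
  have hd2 : d ^ 2 ≤ (lam * t - c) ^ 2 := by
    rw [← sq_abs d]
    exact pow_le_pow_left₀ (abs_nonneg d) hd 2
  have hgap : lam ^ 2 - (lam * t - c) ^ 2 / (t * s) - lam * (c - lam * (t - s)) / s
      = c * (lam * t - c) / (t * s) := by
    field_simp
    ring
  have key : lam * (c - lam * (t - s)) / t ≤ lam ^ 2 - d ^ 2 / (t * s) :=
    calc lam * (c - lam * (t - s)) / t
        ≤ lam * (c - lam * (t - s)) / s :=
          div_le_div_of_nonneg_left (mul_nonneg hlam (sub_nonneg.2 hc)) hs hst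
      _ ≤ lam ^ 2 - (lam * t - c) ^ 2 / (t * s) := by
          have hc0 : 0 ≤ c := (mul_nonneg hlam (sub_nonneg.2 hst)).trans hc
          have : 0 ≤ c * (lam * t - c) / (t * s) :=
            div_nonneg (mul_nonneg hc0 (sub_nonneg.2 hct)) (by positivity)
          linarith
      _ ≤ lam ^ 2 - d ^ 2 / (t * s) := by
          gcongr
  rw [add_mul_sq_div_sub_add_mul_sq_div d lam t s ht.ne' hs.ne']
  calc lam * (t - s) * (c - lam * (t - s)) / (2 * t)
      = (t - s) / 2 * (lam * (c - lam * (t - s)) / t) := by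
        field_simp
    _ ≤ (t - s) / 2 * (lam ^ 2 - d ^ 2 / (t * s)) := by
        gcongr

/-- Exponent comparison for `s = t - √t`: for `t` large, uniformly over `|x| ≤ λt - t^{2/3}`
and `|y| ≤ K`, `(y + λt - x)²/(2t) - (y + λs - x)²/(2s) ≥ (λ/4) t^{1/6}`. -/
theorem exponent_comparison_center (lam K : ℝ) (hlam : 0 < lam) (hK : 0 ≤ K) :
    ∃ T > 0, ∀ t ≥ T, ∀ x : ℝ, |x| ≤ lam * t - t ^ ((2 : ℝ) / 3) → ∀ y : ℝ, |y| ≤ K →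
      (y + lam * t - x) ^ 2 / (2 * t)
          - (y + lam * (t - Real.sqrt t) - x) ^ 2 / (2 * (t - Real.sqrt t))
        ≥ lam / 4 * t ^ ((1 : ℝ) / 6) := by
  obtain ⟨T, hT⟩ := eventually_atTop.1 <|
    ((tendsto_rpow_atTop (by norm_num : (0 : ℝ) < 1 / 6)).eventually_ge_atTop (2 * (K + lam))).and
      (eventually_gt_atTop 1)
  refine ⟨max T 1, by positivity, fun t ht x hx y hy => ?_⟩
  obtain ⟨hu, ht1⟩ := hT t (le_of_max_le_left ht)
  have ht0 : 0 < t := one_pos.trans ht1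
  have hm : t ^ ((2 : ℝ) / 3) = t ^ ((1 : ℝ) / 6) * √t := by
    rw [sqrt_eq_rpow, ← rpow_add ht0]
    norm_num
  set u := t ^ ((1 : ℝ) / 6)
  set r := √t
  have hrr : r * r = t := mul_self_sqrt ht0.le
  have hr1 : 1 < r := by rwa [Real.lt_sqrt zero_le_one, one_pow]
  have hmargin : 0 ≤ u * r / 2 - K - lam * r := by nlinarith
  have hgap := le_add_mul_sq_div_sub_add_mul_sq_div (d := y - x) (lam := lam) (t := t)
    (s := t - r) (c := u * r - K) (by nlinarith) (by linarith) hlam.le (by nlinarith)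
    (by linarith [abs_nonneg x]) (by linarith [abs_sub y x])
  rw [ge_iff_le]
  calc lam / 4 * u
      ≤ lam * (t - (t - r)) * (u * r - K - lam * (t - (t - r))) / (2 * t) := by
        rw [sub_sub_cancel, le_div_iff₀ (by positivity), ← hrr]
        nlinarith [mul_nonneg (mul_nonneg hlam.le (zero_le_one.trans hr1.le)) hmargin]
    _ ≤ _ := hgap
    _ = _ := by ring
end

section
/- Fix λ > 0 and K ≥ 0. There exists T > 0 such that for all t ≥ T, setting s = t + √t, for every x with |x| ≥ λt + t^{2/3}, one has ν_x^{(s)}([−K, K]) ≥ (1/2) · e^{(λ/4) t^{1/6}} · ν_x^{(t)}([−K, K]), where ν_x^{(u)} denotes the Gaussian probability measure on ℝ with mean x − λu and variance u. Equivalently, P(|x + B_s − λs| ≤ K) / P(|x + B_t − λt| ≤ K) ≥ (1/2) e^{(λ/4) t^{1/6}} uniformly over such x. -/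
/-!
On `[-K, K]` the density of `gaussianReal m v` lies between `(2πv)^{-1/2} e^{-(|m| ± K)²/2v}`,
so the ratio of the two probabilities is at least `√(t/s) · exp((|m_t| - K)²/2t - (|m_s| + K)²/2s)`
with `√(t/s) ≥ 1/2`. Writing `t = r⁶` (so `√t = r³`, `t^{2/3} = r⁴`, `t^{1/6} = r`), the exponent
gap becomes a polynomial inequality in `r`. For `x > 0` the mean `a = x - λt ≥ r⁴` moves to
`a - λr³`, towards the origin, and the drift alone yields a gain `≈ λa/√t ≥ λr`. For `x < 0`
the mean `a = λt - x ≥ 2λt + r⁴` moves away from the origin, but the larger variance gains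
`≈ a²/2t^{3/2}`, which exceeds the drift loss `λa/√t` by at least `λr`.
-/

open MeasureTheory ProbabilityTheory Real

namespace ProbabilityTheory

lemma toReal_gaussianReal_eq_integral (m : ℝ) {v : NNReal} (hv : v ≠ 0) (s : Set ℝ) :
    (gaussianReal m v s).toReal = ∫ y in s, gaussianPDFReal m v y := by
  rw [gaussianReal_apply_eq_integral _ hv, ENNReal.toReal_ofReal
    (integral_nonneg fun y => gaussianPDFReal_nonneg _ _ y)]

lemma gaussianPDFReal_le_of_le_abs_sub {m y d : ℝ} (v : NNReal) (hd : 0 ≤ d)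
    (h : d ≤ |y - m|) :
    gaussianPDFReal m v y ≤ (√(2 * π * v))⁻¹ * exp (-d ^ 2 / (2 * v)) := by
  rw [gaussianPDFReal, ← sq_abs (y - m)]
  gcongr

lemma le_gaussianPDFReal_of_abs_sub_le {m y d : ℝ} (v : NNReal) (h : |y - m| ≤ d) :
    (√(2 * π * v))⁻¹ * exp (-d ^ 2 / (2 * v)) ≤ gaussianPDFReal m v y := by
  rw [gaussianPDFReal, ← sq_abs (y - m)]
  gcongr

lemma abs_sub_mem_Icc_of_mem_Icc {m y K : ℝ} (hy : y ∈ Set.Icc (-K) K) :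
    |y - m| ∈ Set.Icc (|m| - K) (|m| + K) := by
  have hyK : |y| ≤ K := abs_le.2 hy
  constructor
  · linarith [abs_sub_abs_le_abs_sub m y, abs_sub_comm m y]
  · linarith [abs_sub y m]

lemma toReal_gaussianReal_Icc_le {m K : ℝ} {v : NNReal} (hv : v ≠ 0) (hK : 0 ≤ K)
    (hm : K ≤ |m|) :
    (gaussianReal m v (Set.Icc (-K) K)).toReal
      ≤ 2 * K * ((√(2 * π * v))⁻¹ * exp (-(|m| - K) ^ 2 / (2 * v))) := by
  rw [toReal_gaussianReal_eq_integral _ hv]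
  have hpdf : ∀ y ∈ Set.Icc (-K) K,
      ‖gaussianPDFReal m v y‖ ≤ (√(2 * π * v))⁻¹ * exp (-(|m| - K) ^ 2 / (2 * v)) := by
    intro y hy
    rw [Real.norm_of_nonneg (gaussianPDFReal_nonneg _ _ _)]
    exact gaussianPDFReal_le_of_le_abs_sub v (by linarith) (abs_sub_mem_Icc_of_mem_Icc hy).1
  have := norm_setIntegral_le_of_norm_le_const (μ := volume) measure_Icc_lt_top hpdf
  rw [Real.volume_real_Icc_of_le (by linarith),
    Real.norm_of_nonneg (integral_nonneg fun y => gaussianPDFReal_nonneg _ _ y)] at this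
  linarith

lemma le_toReal_gaussianReal_Icc {m K : ℝ} {v : NNReal} (hv : v ≠ 0) (hK : 0 ≤ K) :
    2 * K * ((√(2 * π * v))⁻¹ * exp (-(|m| + K) ^ 2 / (2 * v)))
      ≤ (gaussianReal m v (Set.Icc (-K) K)).toReal := by
  rw [toReal_gaussianReal_eq_integral _ hv]
  have hpdf : ∀ y ∈ Set.Icc (-K) K,
      (√(2 * π * v))⁻¹ * exp (-(|m| + K) ^ 2 / (2 * v)) ≤ gaussianPDFReal m v y :=
    fun y hy => le_gaussianPDFReal_of_abs_sub_le v (abs_sub_mem_Icc_of_mem_Icc hy).2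
  have := setIntegral_ge_of_const_le_real (μ := volume) measurableSet_Icc measure_Icc_lt_top.ne
    hpdf (integrable_gaussianPDFReal m v).integrableOn
  rw [Real.volume_real_Icc_of_le (by linarith)] at this
  linarith

lemma half_mul_exp_mul_toReal_gaussianReal_Icc_le {m₁ m₂ s t K c : ℝ}
    (ht : 0 < t) (hs : 0 < s) (hst : s ≤ 4 * t) (hK : 0 ≤ K) (hm₂ : K ≤ |m₂|)
    (hc : c ≤ (|m₂| - K) ^ 2 / (2 * t) - (|m₁| + K) ^ 2 / (2 * s)) :
    1 / 2 * exp c * (gaussianReal m₂ t.toNNReal (Set.Icc (-K) K)).toReal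
      ≤ (gaussianReal m₁ s.toNNReal (Set.Icc (-K) K)).toReal := by
  have hupper := toReal_gaussianReal_Icc_le (Real.toNNReal_pos.2 ht).ne' hK hm₂
  have hlower := le_toReal_gaussianReal_Icc (m := m₁) (Real.toNNReal_pos.2 hs).ne' hK
  rw [Real.coe_toNNReal _ ht.le] at hupper
  rw [Real.coe_toNNReal _ hs.le] at hlower
  have hsqrt : (2 * √(2 * π * t))⁻¹ ≤ (√(2 * π * s))⁻¹ := by
    have h4 : 2 * √(2 * π * t) = √(2 * π * (4 * t)) := by
      rw [show 2 * π * (4 * t) = 2 ^ 2 * (2 * π * t) by ring,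
        Real.sqrt_mul' _ (by positivity : (0 : ℝ) ≤ 2 * π * t), Real.sqrt_sq zero_le_two]
    rw [h4]
    gcongr
  have hexp : exp c * exp (-(|m₂| - K) ^ 2 / (2 * t)) ≤ exp (-(|m₁| + K) ^ 2 / (2 * s)) := by
    rw [← exp_add]
    gcongr
    linarith [neg_div (2 * t) ((|m₂| - K) ^ 2), neg_div (2 * s) ((|m₁| + K) ^ 2)]
  calc 1 / 2 * exp c * (gaussianReal m₂ t.toNNReal (Set.Icc (-K) K)).toReal
      ≤ 1 / 2 * exp c * (2 * K * ((√(2 * π * t))⁻¹ * exp (-(|m₂| - K) ^ 2 / (2 * t)))) := by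
        gcongr
    _ = 2 * K * ((2 * √(2 * π * t))⁻¹ * (exp c * exp (-(|m₂| - K) ^ 2 / (2 * t)))) := by
        rw [mul_inv]; ring
    _ ≤ 2 * K * ((√(2 * π * s))⁻¹ * exp (-(|m₁| + K) ^ 2 / (2 * s))) := by
        gcongr
    _ ≤ _ := hlower

end ProbabilityTheory

lemma le_sq_div_sub_sq_div_of_le {r c A B : ℝ} (hr : 0 < r)
    (h : 2 * c * (r ^ 13 + r ^ 10) ≤ A ^ 2 * r ^ 3 - (B ^ 2 - A ^ 2) * r ^ 6) :
    c * r ≤ A ^ 2 / (2 * r ^ 6) - B ^ 2 / (2 * (r ^ 6 + r ^ 3)) := by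
  have hnum : A ^ 2 / (2 * r ^ 6) - B ^ 2 / (2 * (r ^ 6 + r ^ 3))
      = (A ^ 2 * r ^ 3 - (B ^ 2 - A ^ 2) * r ^ 6) / (2 * r ^ 6 * (r ^ 6 + r ^ 3)) := by
    field_simp
    ring
  rw [hnum, le_div_iff₀ (by positivity)]
  linarith [show c * r * (2 * r ^ 6 * (r ^ 6 + r ^ 3)) = 2 * c * (r ^ 13 + r ^ 10) by ring]

-- The drift term `2 λ r⁹ a ≥ 2 λ r¹³` of the numerator carries the gain.
lemma exponent_gap_inward {lam K r a : ℝ} (hlam : 0 ≤ lam) (hr : 2 ≤ r) (hlr : lam ≤ r)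
    (hK : 8 * K ≤ lam * r ^ 3) (ha : r ^ 4 ≤ a) :
    lam / 4 * r
      ≤ (a - K) ^ 2 / (2 * r ^ 6) - (a - lam * r ^ 3 + K) ^ 2 / (2 * (r ^ 6 + r ^ 3)) := by
  apply le_sq_div_sub_sq_div_of_le (by positivity)
  have hr3 : 2 ^ 3 ≤ r ^ 3 := pow_le_pow_left₀ zero_le_two hr 3
  have hlr3 : lam * r ^ 3 ≤ r ^ 4 := by
    rw [pow_succ r 3, mul_comm (r ^ 3)]
    gcongr
  have hlr3_nonneg : 0 ≤ lam * r ^ 3 := by positivity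
  calc 2 * (lam / 4) * (r ^ 13 + r ^ 10) ≤ 3 / 4 * (lam * r ^ 3) * r ^ 4 * r ^ 6 := by
        have hlr10 : 0 ≤ lam * r ^ 10 := by positivity
        linarith [mul_le_mul_of_nonneg_left hr3 hlr10]
    _ ≤ (lam * r ^ 3 - 2 * K) * (2 * a - lam * r ^ 3) * r ^ 6 := by
        gcongr
        · linarith
        · linarith
        · linarith
    _ ≤ (a - K) ^ 2 * r ^ 3 + (lam * r ^ 3 - 2 * K) * (2 * a - lam * r ^ 3) * r ^ 6 :=
        le_add_of_nonneg_left (by positivity)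
    _ = _ := by ring

-- The variance increase contributes `a² r³`, which beats the drift loss `2 λ r⁹ a`
-- because `a - 2 λ r⁶ ≥ r⁴`.
lemma exponent_gap_outward {lam K r a : ℝ} (hlam : 0 ≤ lam) (hK : 0 ≤ K) (hr : 1 ≤ r)
    (hlr : 4 * lam ≤ r) (hKr : 24 * K ≤ r) (ha : 2 * lam * r ^ 6 + r ^ 4 ≤ a) :
    lam / 4 * r
      ≤ (a - K) ^ 2 / (2 * r ^ 6) - (a + lam * r ^ 3 + K) ^ 2 / (2 * (r ^ 6 + r ^ 3)) := by
  apply le_sq_div_sub_sq_div_of_le (by positivity)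
  have hr0 : 0 ≤ r := by linarith
  have ha0 : 0 ≤ a := le_trans (by positivity) ha
  have hN : (a - K) ^ 2 * r ^ 3 - ((a + lam * r ^ 3 + K) ^ 2 - (a - K) ^ 2) * r ^ 6
      = a * r ^ 3 * (a - 2 * lam * r ^ 6) - 2 * K * a * r ^ 3 - 4 * K * a * r ^ 6 + K ^ 2 * r ^ 3
        - lam ^ 2 * r ^ 12 - 2 * K * lam * r ^ 9 := by ring
  have hvar : a * r ^ 3 * r ^ 4 ≤ a * r ^ 3 * (a - 2 * lam * r ^ 6) := by gcongr; linarith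
  have hK₁ : K * a * r ^ 3 ≤ K * a * r ^ 6 := by gcongr; norm_num
  have hK₂ : 24 * K * (a * r ^ 6) ≤ r * (a * r ^ 6) := by gcongr
  have hK₃ : 24 * K * (lam * r ^ 9) ≤ r * (lam * r ^ 9) := by gcongr
  have ha₁ : 2 * lam * r ^ 6 * r ^ 7 ≤ a * r ^ 7 := by gcongr; linarith [pow_nonneg hr0 4]
  have hlam₁ : 4 * lam * (lam * r ^ 12) ≤ r * (lam * r ^ 12) := by gcongr
  have hr₁ : lam * r ^ 10 ≤ lam * r ^ 13 := by gcongr; norm_num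
  have hK₄ : 0 ≤ K ^ 2 * r ^ 3 := by positivity
  have hlr10 : 0 ≤ lam * r ^ 10 := by positivity
  linarith

lemma pow_rpow_of_mul_eq {r q : ℝ} (hr : 0 ≤ r) {n k : ℕ} (hq : n * q = k) :
    (r ^ n) ^ q = r ^ k := by
  rw [← rpow_natCast r n, ← rpow_mul hr, hq, rpow_natCast]

lemma gaussian_ratio_bound_pow_six {lam K r x : ℝ} (hlam : 0 < lam) (hK : 0 ≤ K)
    (hr : 2 + 4 * lam + 24 * K + 8 * K / lam ≤ r) (hx : lam * r ^ 6 + r ^ 4 ≤ |x|) :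
    1 / 2 * exp (lam / 4 * r) * (gaussianReal (x - lam * r ^ 6) (r ^ 6).toNNReal
        (Set.Icc (-K) K)).toReal
      ≤ (gaussianReal (x - lam * (r ^ 6 + r ^ 3)) (r ^ 6 + r ^ 3).toNNReal
        (Set.Icc (-K) K)).toReal := by
  have hKlam : 0 ≤ 8 * K / lam := by positivity
  have hr1 : 1 ≤ r := by linarith
  have hr0 : 0 < r := by linarith
  have hr3 : r ≤ r ^ 3 := le_self_pow₀ hr1 (by norm_num)
  have hr36 : r ^ 3 ≤ r ^ 6 := pow_le_pow_right₀ hr1 (by norm_num)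
  have hKr : 8 * K ≤ lam * r ^ 3 := by
    have : 8 * K ≤ r * lam := (div_le_iff₀ hlam).1 (by linarith)
    nlinarith
  have hlr : lam * r ^ 3 ≤ r ^ 4 := by nlinarith [pow_pos hr0 3]
  have hlr6 : 0 < lam * r ^ 6 := by positivity
  have key := half_mul_exp_mul_toReal_gaussianReal_Icc_le (m₁ := x - lam * (r ^ 6 + r ^ 3))
    (m₂ := x - lam * r ^ 6) (s := r ^ 6 + r ^ 3) (t := r ^ 6) (c := lam / 4 * r)
    (by positivity) (by positivity) (by linarith) hK
  rcases le_or_gt 0 x with hx0 | hx0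
  · rw [abs_of_nonneg hx0] at hx
    have h₂ : |x - lam * r ^ 6| = x - lam * r ^ 6 := abs_of_nonneg (by linarith)
    have h₁ : |x - lam * (r ^ 6 + r ^ 3)| = x - lam * r ^ 6 - lam * r ^ 3 := by
      rw [abs_of_nonneg (by linarith)]; ring
    rw [h₁, h₂] at key
    exact key (by nlinarith)
      (exponent_gap_inward hlam.le (by linarith) (by linarith) hKr (by linarith))
  · rw [abs_of_neg hx0] at hx
    have h₂ : |x - lam * r ^ 6| = lam * r ^ 6 - x := by rw [abs_of_neg (by linarith)]; ring
    have h₁ : |x - lam * (r ^ 6 + r ^ 3)| = lam * r ^ 6 - x + lam * r ^ 3 := by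
      rw [abs_of_neg (by nlinarith)]; ring
    rw [h₁, h₂] at key
    exact key (by nlinarith)
      (exponent_gap_outward hlam.le hK hr1 (by linarith) (by linarith) (by linarith))

/-- Ratio bound for `s = t + √t`: for `t` large, uniformly over `|x| ≥ λt + t^{2/3}`,
`P(|x + B_s - λs| ≤ K) ≥ (1/2) e^{(λ/4) t^{1/6}} P(|x + B_t - λt| ≤ K)`, where
`x + B_u - λu` has law `gaussianReal (x - λu) u`. -/
theorem gaussian_ratio_bound_outer (lam K : ℝ) (hlam : 0 < lam) (hK : 0 ≤ K) :
    ∃ T > 0, ∀ t ≥ T, ∀ x : ℝ, lam * t + t ^ ((2 : ℝ) / 3) ≤ |x| →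
      ((gaussianReal (x - lam * (t + Real.sqrt t)) (t + Real.sqrt t).toNNReal
          (Set.Icc (-K) K)).toReal
        ≥ 1 / 2 * Real.exp (lam / 4 * t ^ ((1 : ℝ) / 6))
          * (gaussianReal (x - lam * t) t.toNNReal (Set.Icc (-K) K)).toReal) := by
  have hR : 0 < 2 + 4 * lam + 24 * K + 8 * K / lam := by positivity
  refine ⟨(2 + 4 * lam + 24 * K + 8 * K / lam) ^ 6, by positivity, fun t ht x hx => ?_⟩
  obtain ⟨r, hr0, rfl⟩ : ∃ r, 0 < r ∧ t = r ^ 6 :=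
    have ht0 : 0 < t := lt_of_lt_of_le (by positivity) ht
    ⟨t ^ ((6 : ℕ)⁻¹ : ℝ), by positivity, (rpow_inv_natCast_pow ht0.le (by norm_num)).symm⟩
  have hRr := (pow_le_pow_iff_left₀ hR.le hr0.le (by norm_num : 6 ≠ 0)).1 ht
  rw [pow_rpow_of_mul_eq (k := 4) hr0.le (by norm_num)] at hx
  rw [pow_rpow_of_mul_eq (k := 1) hr0.le (by norm_num), pow_one,
    show √(r ^ 6) = r ^ 3 by rw [show r ^ 6 = (r ^ 3) ^ 2 by ring, sqrt_sq (by positivity)]]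
  exact gaussian_ratio_bound_pow_six hlam hK hRr hx
end

section
/- Fix λ > 0 and K ≥ 0. There exists T > 0 such that for all t ≥ T, setting s = t − √t, for every x with |x| ≤ λt − t^{2/3}, one has ν_x^{(s)}([−K, K]) ≥ (1/2) · e^{(λ/4) t^{1/6}} · ν_x^{(t)}([−K, K]), where ν_x^{(u)} denotes the Gaussian probability measure on ℝ with mean x − λu and variance u. Equivalently, P(|x + B_s − λs| ≤ K) / P(|x + B_t − λt| ≤ K) ≥ (1/2) e^{(λ/4) t^{1/6}} uniformly over such x. -/
open MeasureTheory ProbabilityTheory Real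

lemma gauss_poly_core (lam r a : ℝ) (hlam : 0 < lam) (hr2 : 2 ≤ r)
    (hlr : 1 ≤ lam * r ^ 2) (h4l : 4 * lam ≤ r)
    (ha : a ^ 2 ≤ (lam * r ^ 6 - r ^ 4 / 2) ^ 2) :
    2 * (r ^ 6 - (r ^ 6 - r ^ 3)) * a ^ 2
      ≤ 2 * lam ^ 2 * (r ^ 6 * (r ^ 6 - r ^ 3)) * (r ^ 6 - (r ^ 6 - r ^ 3))
        - lam * r * (r ^ 6 * (r ^ 6 - r ^ 3)) := by
  have hr0 : (0:ℝ) < r := by linarith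
  have h1 : 0 ≤ (lam * r ^ 2 - 1) * r ^ 11 :=
    mul_nonneg (by linarith) (by positivity)
  have h2 : 0 ≤ (r - 4 * lam) * (lam * r ^ 12) :=
    mul_nonneg (by linarith) (mul_nonneg hlam.le (by positivity))
  have hm : 2 * r ^ 3 * a ^ 2 ≤ 2 * r ^ 3 * (lam * r ^ 6 - r ^ 4 / 2) ^ 2 :=
    mul_le_mul_of_nonneg_left ha (by positivity)
  nlinarith [hm, h1, h2, mul_nonneg hlam.le (pow_nonneg hr0.le 10)]

set_option maxHeartbeats 1000000 in
/-- Ratio bound for `s = t - √t`: for `t` large, uniformly over `|x| ≤ λt - t^{2/3}`,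
`P(|x + B_s - λs| ≤ K) ≥ (1/2) e^{(λ/4) t^{1/6}} P(|x + B_t - λt| ≤ K)`, where
`x + B_u - λu` has law `gaussianReal (x - λu) u`. -/
theorem gaussian_ratio_bound_center (lam K : ℝ) (hlam : 0 < lam) (hK : 0 ≤ K) :
    ∃ T > 0, ∀ t ≥ T, ∀ x : ℝ, |x| ≤ lam * t - t ^ ((2 : ℝ) / 3) →
      ((gaussianReal (x - lam * (t - Real.sqrt t)) (t - Real.sqrt t).toNNReal
          (Set.Icc (-K) K)).toReal
        ≥ 1 / 2 * Real.exp (lam / 4 * t ^ ((1 : ℝ) / 6))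
          * (gaussianReal (x - lam * t) t.toNNReal (Set.Icc (-K) K)).toReal) := by
  set R : ℝ := 2 + 1 / lam + 4 * lam + 2 * K with hRdef
  have hRpos : 0 < R := by positivity
  refine ⟨R ^ 6, by positivity, ?_⟩
  intro t ht x hx
  have htpos : 0 < t := lt_of_lt_of_le (by positivity) ht
  set r : ℝ := t ^ ((1 : ℝ) / 6) with hrdef
  have hr0 : 0 < r := Real.rpow_pos_of_pos htpos _
  have hrR : R ≤ r := by
    calc R = (R ^ 6) ^ ((1 : ℝ) / 6) := by
          rw [← Real.rpow_natCast R 6, ← Real.rpow_mul hRpos.le]; norm_num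
      _ ≤ r := Real.rpow_le_rpow (by positivity) ht (by norm_num)
  have hinvlam : 0 < 1 / lam := by positivity
  have hr2 : (2:ℝ) ≤ r := le_trans (by rw [hRdef]; linarith) hrR
  have hlr : 1 ≤ lam * r ^ 2 := by
    have h1 : 1 / lam ≤ r := le_trans (by rw [hRdef]; linarith) hrR
    rw [div_le_iff₀ hlam] at h1
    nlinarith
  have h4l : 4 * lam ≤ r := le_trans (by rw [hRdef]; linarith) hrR
  have hKr : 2 * K ≤ r ^ 4 := by
    have h1 : 2 * K ≤ r := le_trans (by rw [hRdef]; linarith) hrR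
    nlinarith
  have ht_eq : t = r ^ 6 := by
    rw [hrdef, ← Real.rpow_natCast (t ^ ((1:ℝ)/6)) 6, ← Real.rpow_mul htpos.le]
    norm_num
  have hsqrt : Real.sqrt t = r ^ 3 := by
    rw [Real.sqrt_eq_rpow t,
      hrdef, ← Real.rpow_natCast (t ^ ((1:ℝ)/6)) 3, ← Real.rpow_mul htpos.le]
    norm_num
  have ht23 : t ^ ((2:ℝ)/3) = r ^ 4 := by
    rw [hrdef, ← Real.rpow_natCast (t ^ ((1:ℝ)/6)) 4, ← Real.rpow_mul htpos.le]
    norm_num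
  set s : ℝ := t - Real.sqrt t with hsdef
  have hs_eq : s = r ^ 6 - r ^ 3 := by rw [hsdef, hsqrt, ht_eq]
  have hs_pos : 0 < s := by rw [hs_eq]; nlinarith
  have hst : s ≤ t := by rw [hs_eq, ht_eq]; nlinarith
  have hs_ne : s.toNNReal ≠ 0 := (Real.toNNReal_pos.mpr hs_pos).ne'
  have ht_ne : t.toNNReal ≠ 0 := (Real.toNNReal_pos.mpr htpos).ne'
  have hcoe_s : (s.toNNReal : ℝ) = s := Real.coe_toNNReal s hs_pos.le
  have hcoe_t : (t.toNNReal : ℝ) = t := Real.coe_toNNReal t htpos.le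
  clear_value r s
  set c : ℝ := 1 / 2 * Real.exp (lam / 4 * t ^ ((1 : ℝ) / 6)) with hcdef
  have hc0 : 0 < c := by positivity
  -- pointwise bound on densities
  have hpt : ∀ y ∈ Set.Icc (-K) K,
      c * gaussianPDFReal (x - lam * t) t.toNNReal y
        ≤ gaussianPDFReal (x - lam * s) s.toNNReal y := by
    intro y hy
    set a : ℝ := y - x with hadef
    have hax : |a| ≤ lam * r ^ 6 - r ^ 4 / 2 := by
      have h1 : |a| ≤ |x| + K := by
        rw [hadef, abs_sub_comm]
        calc |x - y| ≤ |x| + |y| := abs_sub _ _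
          _ ≤ |x| + K := by
              have := abs_le.mpr ⟨hy.1, hy.2⟩; linarith
      have h2 : |x| ≤ lam * r ^ 6 - r ^ 4 := by rw [← ht_eq, ← ht23]; exact hx
      linarith
    have ha2 : a ^ 2 ≤ (lam * r ^ 6 - r ^ 4 / 2) ^ 2 := by
      have h0 : (0:ℝ) ≤ |a| := abs_nonneg a
      have h1 := pow_le_pow_left₀ h0 hax 2
      rwa [sq_abs] at h1
    -- exponent inequality
    have hD : lam / 4 * r ≤ (y - (x - lam * t)) ^ 2 / (2 * t)
        - (y - (x - lam * s)) ^ 2 / (2 * s) := by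
      have hnum := gauss_poly_core lam r a hlam hr2 hlr h4l ha2
      have hts : y - (x - lam * t) = a + lam * t := by rw [hadef]; ring
      have hss : y - (x - lam * s) = a + lam * s := by rw [hadef]; ring
      rw [hts, hss, ← sub_nonneg]
      have hE : (a + lam * t) ^ 2 / (2 * t) - (a + lam * s) ^ 2 / (2 * s)
          - lam / 4 * r
          = (2 * (t - s) * (lam ^ 2 * (t * s)) - 2 * (t - s) * a ^ 2
              - lam * r * (t * s)) / (4 * (t * s)) := by
        field_simp
        ring
      rw [hE]
      apply div_nonneg _ (by positivity)
      rw [ht_eq, hs_eq]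
      linarith only [hnum]
    -- assemble pointwise
    unfold gaussianPDFReal
    rw [hcoe_s, hcoe_t]
    have hinv : (Real.sqrt (2 * π * t))⁻¹ ≤ (Real.sqrt (2 * π * s))⁻¹ := by
      apply inv_anti₀
      · exact Real.sqrt_pos.mpr (by positivity)
      · exact Real.sqrt_le_sqrt (by nlinarith [Real.pi_pos])
    have hexp : c * Real.exp (-(y - (x - lam * t)) ^ 2 / (2 * t))
        ≤ Real.exp (-(y - (x - lam * s)) ^ 2 / (2 * s)) := by
      rw [hcdef]
      have h1 : 1 / 2 * Real.exp (lam / 4 * t ^ ((1:ℝ)/6))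
          * Real.exp (-(y - (x - lam * t)) ^ 2 / (2 * t))
          ≤ Real.exp (lam / 4 * r + -(y - (x - lam * t)) ^ 2 / (2 * t)) := by
        rw [Real.exp_add, ← hrdef]
        nlinarith [Real.exp_pos (lam / 4 * r), Real.exp_pos (-(y - (x - lam * t)) ^ 2 / (2 * t)),
          mul_pos (Real.exp_pos (lam / 4 * r)) (Real.exp_pos (-(y - (x - lam * t)) ^ 2 / (2 * t)))]
      refine h1.trans (Real.exp_le_exp.mpr ?_)
      rw [neg_div, neg_div]
      linarith [hD]
    calc c * ((Real.sqrt (2 * π * t))⁻¹ * Real.exp (-(y - (x - lam * t)) ^ 2 / (2 * t)))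
        = (Real.sqrt (2 * π * t))⁻¹ * (c * Real.exp (-(y - (x - lam * t)) ^ 2 / (2 * t))) := by
          ring
      _ ≤ (Real.sqrt (2 * π * s))⁻¹ * Real.exp (-(y - (x - lam * s)) ^ 2 / (2 * s)) := by
          apply mul_le_mul hinv hexp (by positivity)
          positivity
  -- convert measures to integrals
  have hms : (gaussianReal (x - lam * s) s.toNNReal (Set.Icc (-K) K)).toReal
      = ∫ y in Set.Icc (-K) K, gaussianPDFReal (x - lam * s) s.toNNReal y := by
    rw [gaussianReal_apply_eq_integral _ hs_ne, ENNReal.toReal_ofReal]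
    exact setIntegral_nonneg measurableSet_Icc fun y _ => gaussianPDFReal_nonneg _ _ y
  have hmt : (gaussianReal (x - lam * t) t.toNNReal (Set.Icc (-K) K)).toReal
      = ∫ y in Set.Icc (-K) K, gaussianPDFReal (x - lam * t) t.toNNReal y := by
    rw [gaussianReal_apply_eq_integral _ ht_ne, ENNReal.toReal_ofReal]
    exact setIntegral_nonneg measurableSet_Icc fun y _ => gaussianPDFReal_nonneg _ _ y
  have hc2 : c = 1 / 2 * Real.exp (lam / 4 * r) := by rw [hcdef, hrdef]
  rw [ge_iff_le, hms, hmt, ← hc2]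
  calc c * ∫ y in Set.Icc (-K) K, gaussianPDFReal (x - lam * t) t.toNNReal y
      = ∫ y in Set.Icc (-K) K, c * gaussianPDFReal (x - lam * t) t.toNNReal y := by
        exact (MeasureTheory.integral_const_mul c _).symm
    _ ≤ ∫ y in Set.Icc (-K) K, gaussianPDFReal (x - lam * s) s.toNNReal y := by
        apply setIntegral_mono_on
        · exact ((integrable_gaussianPDFReal _ _).const_mul c).integrableOn
        · exact (integrable_gaussianPDFReal _ _).integrableOn
        · exact measurableSet_Icc
        · exact hpt
end
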